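/- Let r : ℝ → ℝ be bounded and measurable and let α ≥ 0. Suppose (μ̃, σ̃) ∈ ℝ × (0, ∞) is a stationary point of the Gaussian objective J^b_α. Then for every N ≥ 1 and every η ∈ ℝ^N, the mixture parameter θ̃ with μ_k = μ̃ and σ_k = σ̃ for all k = 1, …, N and softmax-weight parameters η is a stationary point of the N-component mixture objective J^m_α (all 3N partial derivatives of J^m_α exist and vanish at θ̃), and moreover J^m_α(θ̃) = J^b_α(μ̃, σ̃). -/

import Mathlib

open MeasureTheory Real

/-- Gaussian density `φ(a; μ, σ) = (2πσ²)^(−1/2) · exp(−(a−μ)²/(2σ²))`. -/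
noncomputable def gpdf (μ σ a : ℝ) : ℝ :=
  (Real.sqrt (2 * Real.pi * σ ^ 2))⁻¹ * Real.exp (-((a - μ) ^ 2) / (2 * σ ^ 2))

/-- Entropy-regularized bandit objective under the Gaussian parameterization:
`J^b_α(μ, σ) = ∫ (r(a) − α·log φ(a; μ, σ)) · φ(a; μ, σ) da`. -/
noncomputable def Jb (r : ℝ → ℝ) (α μ σ : ℝ) : ℝ :=
  ∫ a, (r a - α * Real.log (gpdf μ σ a)) * gpdf μ σ a

/-- Softmax weights `w_k = exp(η_k) / Σ_j exp(η_j)`. -/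
noncomputable def softmaxW {N : ℕ} (η : Fin N → ℝ) (k : Fin N) : ℝ :=
  Real.exp (η k) / ∑ j, Real.exp (η j)

/-- Mixture density with softmax weights:
`m(a) = Σ_k w_k · φ(a; μ_k, σ_k)`. -/
noncomputable def mixDensity {N : ℕ} (μs σs η : Fin N → ℝ) (a : ℝ) : ℝ :=
  ∑ k, softmaxW η k * gpdf (μs k) (σs k) a

/-- Entropy-regularized bandit objective under the `N`-component mixture
parameterization. -/
noncomputable def Jm (r : ℝ → ℝ) (α : ℝ) {N : ℕ} (μs σs η : Fin N → ℝ) : ℝ :=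
  ∫ a, (r a - α * Real.log (mixDensity μs σs η a)) * mixDensity μs σs η a

/-- `(μ, σ)` (with `σ > 0`) is a stationary point of `J^b_α`: both partial
derivatives exist and vanish. -/
def IsStatB (r : ℝ → ℝ) (α μ σ : ℝ) : Prop :=
  0 < σ ∧
  (DifferentiableAt ℝ (fun x => Jb r α x σ) μ ∧ deriv (fun x => Jb r α x σ) μ = 0) ∧
  (DifferentiableAt ℝ (fun x => Jb r α μ x) σ ∧ deriv (fun x => Jb r α μ x) σ = 0)

/-- `(μs, σs, η)` (with all `σs k > 0`) is a stationary point of `J^m_α`: all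
`3N` partial derivatives exist and vanish. -/
def IsStatM (r : ℝ → ℝ) (α : ℝ) {N : ℕ} (μs σs η : Fin N → ℝ) : Prop :=
  (∀ k, 0 < σs k) ∧
  ∀ k : Fin N,
    (DifferentiableAt ℝ (fun x => Jm r α (Function.update μs k x) σs η) (μs k) ∧
      deriv (fun x => Jm r α (Function.update μs k x) σs η) (μs k) = 0) ∧
    (DifferentiableAt ℝ (fun x => Jm r α μs (Function.update σs k x) η) (σs k) ∧
      deriv (fun x => Jm r α μs (Function.update σs k x) η) (σs k) = 0) ∧
    (DifferentiableAt ℝ (fun x => Jm r α μs σs (Function.update η k x)) (η k) ∧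
      deriv (fun x => Jm r α μs σs (Function.update η k x)) (η k) = 0)

open Filter Topology ProbabilityTheory

/-!
Write `J(p) = ∫ r p + α ∫ negMulLog p`. Moving one parameter of the `k`-th component of the
duplicated mixture turns the density into `p_x = w f_x + (1 - w) f₀`, with `w` the `k`-th weight,
`f_x` the moved Gaussian and `f₀` the original one. The reward term is linear in `p`; the entropy
term is concave, and its concavity gap is bounded through the tangent line at `f₀`, so
`|J(p_x) - w J(f_x) - (1 - w) J(f₀)| ≤ |α| w KL(f_x ‖ f₀)`. The Gaussian KL divergence is an
explicit function of the parameters vanishing to second order at `x₀`, hence `x ↦ J(p_x)` has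
derivative `w · ∂J^b = 0` at `x₀`. The `η`-derivatives vanish because the duplicated mixture does
not depend on the weights.
-/

theorem hasDerivAt_zero_of_norm_le {F : Type*} [NormedAddCommGroup F] [NormedSpace ℝ F]
    {g : ℝ → F} {u : ℝ → ℝ} {x₀ : ℝ} (hu : HasDerivAt u 0 x₀) (hu₀ : u x₀ = 0)
    (hle : ∀ᶠ x in 𝓝 x₀, ‖g x‖ ≤ u x) : HasDerivAt g 0 x₀ := by
  have hg₀ : g x₀ = 0 := norm_le_zero_iff.1 (hu₀ ▸ hle.self_of_nhds)
  rw [hasDerivAt_iff_isLittleO] at hu ⊢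
  simp only [hu₀, hg₀, sub_zero, smul_zero] at hu ⊢
  exact (Asymptotics.IsBigO.of_bound 1 (hle.mono fun x hx => by
    rw [one_mul, Real.norm_eq_abs]; exact hx.trans (le_abs_self _))).trans_isLittleO hu

section EntropyObjective

variable {Ω : Type*} [MeasurableSpace Ω] (ν : Measure Ω) (r : Ω → ℝ) (α : ℝ)

noncomputable def entropyObjective (p : Ω → ℝ) : ℝ :=
  ∫ a, (r a - α * log (p a)) * p a ∂ν

/-- Integrand of the Kullback–Leibler divergence of unnormalized densities: the Bregman divergence
of `x ↦ x log x`. -/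
noncomputable def klIntegrand (s t : ℝ) : ℝ :=
  log s * s - log t * s - s + t

lemma klIntegrand_self (s : ℝ) : klIntegrand s s = 0 := by
  simp [klIntegrand]

/-- The lower bound is concavity of `negMulLog`; the upper bound comes from its tangent line at
`t`. -/
lemma negMulLog_mix_gap_mem_Icc {s t w : ℝ} (hs : 0 < s) (ht : 0 < t) (hw₀ : 0 ≤ w)
    (hw₁ : w ≤ 1) :
    negMulLog (w * s + (1 - w) * t) - w * negMulLog s - (1 - w) * negMulLog t ∈
      Set.Icc 0 (w * klIntegrand s t) := by
  set p := w * s + (1 - w) * t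
  have hp : 0 < p := by
    rcases hw₀.lt_or_eq with hw | rfl
    · have : 0 ≤ (1 - w) * t := mul_nonneg (sub_nonneg.2 hw₁) ht.le
      exact add_pos_of_pos_of_nonneg (mul_pos hw hs) this
    · simpa [p] using ht
  constructor
  · have := Real.concaveOn_negMulLog.2 (Set.mem_Ici.2 hs.le) (Set.mem_Ici.2 ht.le) hw₀
      (sub_nonneg.2 hw₁) (add_sub_cancel w 1)
    simp only [smul_eq_mul] at this
    linarith
  · have htangent : p * log (t / p) ≤ t - p := by
      calc p * log (t / p) ≤ p * (t / p - 1) :=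
            mul_le_mul_of_nonneg_left (log_le_sub_one_of_pos (div_pos ht hp)) hp.le
        _ = t - p := by field_simp
    rw [log_div ht.ne' hp.ne'] at htangent
    simp only [negMulLog, klIntegrand]
    nlinarith

lemma abs_log_mul_mix_gap_le {c s t w : ℝ} (hs : 0 < s) (ht : 0 < t) (hw₀ : 0 ≤ w)
    (hw₁ : w ≤ 1) :
    |(c - α * log (w * s + (1 - w) * t)) * (w * s + (1 - w) * t) -
        (w * ((c - α * log s) * s) + (1 - w) * ((c - α * log t) * t))| ≤
      |α| * (w * klIntegrand s t) := by
  obtain ⟨hlo, hhi⟩ := negMulLog_mix_gap_mem_Icc hs ht hw₀ hw₁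
  have hgap : (c - α * log (w * s + (1 - w) * t)) * (w * s + (1 - w) * t) -
        (w * ((c - α * log s) * s) + (1 - w) * ((c - α * log t) * t)) =
      α * (negMulLog (w * s + (1 - w) * t) - w * negMulLog s - (1 - w) * negMulLog t) := by
    simp only [negMulLog]; ring
  rw [hgap, abs_mul, abs_of_nonneg hlo]
  exact mul_le_mul_of_nonneg_left hhi (abs_nonneg α)

variable {ν r α} in
theorem abs_entropyObjective_mix_sub_le {f q : Ω → ℝ} {w : ℝ} (hr : Measurable r)
    (hfm : Measurable f) (hqm : Measurable q) (hf : ∀ a, 0 < f a) (hq : ∀ a, 0 < q a)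
    (hw₀ : 0 ≤ w) (hw₁ : w ≤ 1)
    (hFf : Integrable (fun a => (r a - α * log (f a)) * f a) ν)
    (hFq : Integrable (fun a => (r a - α * log (q a)) * q a) ν)
    (hK : Integrable (fun a => klIntegrand (f a) (q a)) ν) :
    |entropyObjective ν r α (fun a => w * f a + (1 - w) * q a) -
        (w * entropyObjective ν r α f + (1 - w) * entropyObjective ν r α q)| ≤
      |α| * (w * ∫ a, klIntegrand (f a) (q a) ∂ν) := by
  set p := fun a => w * f a + (1 - w) * q a
  have hcomb : Integrable (fun a => w * ((r a - α * log (f a)) * f a) +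
      (1 - w) * ((r a - α * log (q a)) * q a)) ν :=
    (hFf.const_mul w).add (hFq.const_mul (1 - w))
  have hgap : ∀ a, ‖(r a - α * log (p a)) * p a - (w * ((r a - α * log (f a)) * f a) +
      (1 - w) * ((r a - α * log (q a)) * q a))‖ ≤ |α| * (w * klIntegrand (f a) (q a)) :=
    fun a => (Real.norm_eq_abs _).trans_le (abs_log_mul_mix_gap_le α (hf a) (hq a) hw₀ hw₁)
  have hFp : Integrable (fun a => (r a - α * log (p a)) * p a) ν := by
    have hpm : Measurable p := (hfm.const_mul w).add (hqm.const_mul (1 - w))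
    exact (hcomb.norm.add ((hK.const_mul w).const_mul |α|)).mono'
      ((hr.sub (hpm.log.const_mul α)).mul hpm).aestronglyMeasurable
      (ae_of_all _ fun a => (norm_le_insert' _ _).trans (add_le_add_right (hgap a) _))
  unfold entropyObjective
  rw [← integral_const_mul, ← integral_const_mul, ← integral_add (hFf.const_mul w)
    (hFq.const_mul (1 - w)), ← integral_sub hFp hcomb, ← integral_const_mul, ← integral_const_mul]
  exact norm_integral_le_of_norm_le ((hK.const_mul w).const_mul |α|) (ae_of_all _ hgap)

variable {ν r α} in
theorem hasDerivAt_entropyObjective_mix {f : ℝ → Ω → ℝ} {x₀ d w : ℝ} (hr : Measurable r)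
    (hw₀ : 0 ≤ w) (hw₁ : w ≤ 1)
    (hf : ∀ᶠ x in 𝓝 x₀, Measurable (f x) ∧ (∀ a, 0 < f x a) ∧
      Integrable (fun a => (r a - α * log (f x a)) * f x a) ν ∧
      Integrable (fun a => klIntegrand (f x a) (f x₀ a)) ν)
    (hJ : HasDerivAt (fun x => entropyObjective ν r α (f x)) d x₀)
    (hKL : HasDerivAt (fun x => ∫ a, klIntegrand (f x a) (f x₀ a) ∂ν) 0 x₀) :
    HasDerivAt (fun x => entropyObjective ν r α (fun a => w * f x a + (1 - w) * f x₀ a))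
      (w * d) x₀ := by
  obtain ⟨hqm, hq, hFq, -⟩ := hf.self_of_nhds
  have hgap : HasDerivAt (fun x => entropyObjective ν r α (fun a => w * f x a + (1 - w) * f x₀ a)
      - (w * entropyObjective ν r α (f x) + (1 - w) * entropyObjective ν r α (f x₀))) 0 x₀ := by
    refine hasDerivAt_zero_of_norm_le
      (u := fun x => |α| * (w * ∫ a, klIntegrand (f x a) (f x₀ a) ∂ν))
      (by simpa using (hKL.const_mul w).const_mul |α|) (by simp [klIntegrand_self])
      (hf.mono fun x ⟨hfm, hfpos, hFf, hKx⟩ =>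
        abs_entropyObjective_mix_sub_le hr hfm hqm hfpos hq hw₀ hw₁ hFf hFq hKx)
  have hsum := (hgap.add (hJ.const_mul w)).add_const ((1 - w) * entropyObjective ν r α (f x₀))
  refine (hsum.congr_deriv (zero_add _)).congr_of_eventuallyEq (.of_forall fun x => ?_)
  simp only [Pi.add_apply]
  ring

end EntropyObjective

section Gaussian

lemma gpdf_eq_gaussianPDFReal (μ σ : ℝ) : gpdf μ σ = gaussianPDFReal μ (σ ^ 2).toNNReal := by
  ext a
  simp [gpdf, gaussianPDFReal, Real.coe_toNNReal _ (sq_nonneg σ)]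

variable {μ σ : ℝ}

lemma gaussianVar_ne_zero (hσ : σ ≠ 0) : (σ ^ 2).toNNReal ≠ 0 := by
  simpa using hσ

lemma gpdf_pos (hσ : σ ≠ 0) (a : ℝ) : 0 < gpdf μ σ a :=
  gpdf_eq_gaussianPDFReal μ σ ▸ gaussianPDFReal_pos _ _ _ (gaussianVar_ne_zero hσ)

lemma measurable_gpdf : Measurable (gpdf μ σ) :=
  gpdf_eq_gaussianPDFReal μ σ ▸ measurable_gaussianPDFReal _ _

lemma integral_gpdf (hσ : σ ≠ 0) : ∫ a, gpdf μ σ a = 1 :=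
  gpdf_eq_gaussianPDFReal μ σ ▸ integral_gaussianPDFReal_eq_one _ (gaussianVar_ne_zero hσ)

lemma integrable_gpdf : Integrable (gpdf μ σ) :=
  gpdf_eq_gaussianPDFReal μ σ ▸ integrable_gaussianPDFReal _ _

lemma integral_mul_gpdf (hσ : σ ≠ 0) (g : ℝ → ℝ) :
    ∫ a, g a * gpdf μ σ a = ∫ a, g a ∂gaussianReal μ (σ ^ 2).toNNReal := by
  simp_rw [integral_gaussianReal_eq_integral_smul (gaussianVar_ne_zero hσ), smul_eq_mul, mul_comm,
    gpdf_eq_gaussianPDFReal]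

lemma integrable_mul_gpdf (hσ : σ ≠ 0) {g : ℝ → ℝ}
    (hg : Integrable g (gaussianReal μ (σ ^ 2).toNNReal)) :
    Integrable (fun a => g a * gpdf μ σ a) := by
  rw [gaussianReal_of_var_ne_zero _ (gaussianVar_ne_zero hσ),
    integrable_withDensity_iff_integrable_smul' (measurable_gaussianPDF _ _)
      (ae_of_all _ fun _ => gaussianPDF_lt_top)] at hg
  simpa [mul_comm, gpdf_eq_gaussianPDFReal] using hg

lemma integrable_sq_sub_mul_gpdf (hσ : σ ≠ 0) (m : ℝ) :
    Integrable (fun a => (a - m) ^ 2 * gpdf μ σ a) :=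
  integrable_mul_gpdf hσ ((memLp_id_gaussianReal 2).sub (memLp_const m)).integrable_sq

lemma integral_sq_sub_mul_gpdf (hσ : σ ≠ 0) (m : ℝ) :
    ∫ a, (a - m) ^ 2 * gpdf μ σ a = σ ^ 2 + (μ - m) ^ 2 := by
  have hshift : ∫ a, (a - m) ^ 2 ∂gaussianReal μ (σ ^ 2).toNNReal
      = ∫ a, a ^ 2 ∂gaussianReal (μ - m) (σ ^ 2).toNNReal := by
    rw [← gaussianReal_map_sub_const, integral_map (by fun_prop) (by fun_prop)]
  have hvar := variance_eq_sub (memLp_id_gaussianReal (μ := μ - m) (v := (σ ^ 2).toNNReal) 2)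
  simp only [variance_id_gaussianReal, Pi.pow_apply, id, integral_id_gaussianReal,
    Real.coe_toNNReal _ (sq_nonneg σ)] at hvar
  rw [integral_mul_gpdf hσ, hshift]
  linarith

lemma log_gpdf (hσ : 0 < σ) (a : ℝ) :
    log (gpdf μ σ a) = -(log (2 * π) / 2) - log σ - (a - μ) ^ 2 / (2 * σ ^ 2) := by
  rw [gpdf, log_mul (inv_ne_zero (sqrt_pos.2 (by positivity)).ne') (exp_ne_zero _), log_inv,
    log_exp, log_sqrt (by positivity), log_mul (by positivity) (by positivity), log_pow]
  ring

variable {m s : ℝ}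

lemma log_gpdf_mul_gpdf (hs : 0 < s) :
    (fun a => log (gpdf m s a) * gpdf μ σ a) = fun a =>
      (-(log (2 * π) / 2) - log s) * gpdf μ σ a - (2 * s ^ 2)⁻¹ * ((a - m) ^ 2 * gpdf μ σ a) := by
  ext a
  rw [log_gpdf hs]
  ring

lemma integrable_log_gpdf_mul_gpdf (hs : 0 < s) (hσ : σ ≠ 0) :
    Integrable (fun a => log (gpdf m s a) * gpdf μ σ a) := by
  rw [log_gpdf_mul_gpdf hs]
  exact (integrable_gpdf.const_mul _).sub ((integrable_sq_sub_mul_gpdf hσ m).const_mul _)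

lemma integral_log_gpdf_mul_gpdf (hs : 0 < s) (hσ : σ ≠ 0) :
    ∫ a, log (gpdf m s a) * gpdf μ σ a =
      -(log (2 * π) / 2) - log s - (σ ^ 2 + (μ - m) ^ 2) / (2 * s ^ 2) := by
  rw [log_gpdf_mul_gpdf hs, integral_sub (integrable_gpdf.const_mul _)
    ((integrable_sq_sub_mul_gpdf hσ m).const_mul _), integral_const_mul, integral_const_mul,
    integral_gpdf hσ, integral_sq_sub_mul_gpdf hσ]
  ring

lemma integrable_sub_mul_log_gpdf_mul_gpdf {r : ℝ → ℝ} {C : ℝ} (hr : Measurable r)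
    (hbd : ∀ a, |r a| ≤ C) (α : ℝ) (hσ : 0 < σ) :
    Integrable (fun a => (r a - α * log (gpdf μ σ a)) * gpdf μ σ a) := by
  simp_rw [sub_mul, mul_assoc]
  exact (integrable_gpdf.bdd_mul hr.aestronglyMeasurable (ae_of_all _ hbd)).sub
    ((integrable_log_gpdf_mul_gpdf hσ hσ.ne').const_mul α)

lemma integrable_klIntegrand_gpdf (hσ : 0 < σ) (hs : 0 < s) :
    Integrable (fun a => klIntegrand (gpdf μ σ a) (gpdf m s a)) := by
  simp_rw [klIntegrand]
  exact (((integrable_log_gpdf_mul_gpdf hσ hσ.ne').sub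
    (integrable_log_gpdf_mul_gpdf hs hσ.ne')).sub integrable_gpdf).add integrable_gpdf

lemma integral_klIntegrand_gpdf (hσ : 0 < σ) (hs : 0 < s) :
    ∫ a, klIntegrand (gpdf μ σ a) (gpdf m s a) =
      log s - log σ + (σ ^ 2 + (μ - m) ^ 2) / (2 * s ^ 2) - 1 / 2 := by
  have hself := integrable_log_gpdf_mul_gpdf (μ := μ) (m := μ) hσ hσ.ne'
  have hcross := integrable_log_gpdf_mul_gpdf (μ := μ) (m := m) hs hσ.ne'
  simp_rw [klIntegrand]
  rw [integral_add ?_ integrable_gpdf, integral_sub ?_ integrable_gpdf, integral_sub hself hcross,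
    integral_log_gpdf_mul_gpdf hσ hσ.ne', integral_log_gpdf_mul_gpdf hs hσ.ne',
    integral_gpdf hσ.ne', integral_gpdf hs.ne']
  · field_simp
    ring
  · exact hself.sub hcross
  · exact (hself.sub hcross).sub integrable_gpdf

lemma hasDerivAt_integral_klIntegrand_gpdf_mean (hσ : 0 < σ) :
    HasDerivAt (fun x => ∫ a, klIntegrand (gpdf x σ a) (gpdf μ σ a)) 0 μ := by
  simp_rw [integral_klIntegrand_gpdf hσ hσ]
  exact (((((hasDerivAt_id μ).sub_const μ).pow 2).const_add (σ ^ 2)).div_const (2 * σ ^ 2)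
    |>.const_add (log σ - log σ) |>.sub_const (1 / 2)).congr_deriv (by simp)

lemma hasDerivAt_integral_klIntegrand_gpdf_std (hσ : 0 < σ) :
    HasDerivAt (fun x => ∫ a, klIntegrand (gpdf μ x a) (gpdf μ σ a)) 0 σ := by
  have hKL : (fun x => log σ - log x + (x ^ 2 + (μ - μ) ^ 2) / (2 * σ ^ 2) - 1 / 2)
      =ᶠ[𝓝 σ] fun x => ∫ a, klIntegrand (gpdf μ x a) (gpdf μ σ a) :=
    (lt_mem_nhds hσ).mono fun x hx => (integral_klIntegrand_gpdf hx hσ).symm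
  exact (((((hasDerivAt_log hσ.ne').const_sub (log σ)).add
    (((hasDerivAt_id σ).pow 2).add_const ((μ - μ) ^ 2) |>.div_const (2 * σ ^ 2))).sub_const (1 / 2)
    ).congr_deriv (by simp only [id]; field_simp; ring)).congr_of_eventuallyEq hKL.symm

variable {r : ℝ → ℝ} {C α w d : ℝ}

theorem hasDerivAt_entropyObjective_mix_gpdf_mean (hr : Measurable r) (hbd : ∀ a, |r a| ≤ C)
    (hσ : 0 < σ) (hw₀ : 0 ≤ w) (hw₁ : w ≤ 1) (hJ : HasDerivAt (fun x => Jb r α x σ) d μ) :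
    HasDerivAt (fun x => entropyObjective volume r α
      (fun a => w * gpdf x σ a + (1 - w) * gpdf μ σ a)) (w * d) μ :=
  hasDerivAt_entropyObjective_mix hr hw₀ hw₁
    (.of_forall fun _ => ⟨measurable_gpdf, gpdf_pos hσ.ne',
      integrable_sub_mul_log_gpdf_mul_gpdf hr hbd α hσ, integrable_klIntegrand_gpdf hσ hσ⟩)
    hJ (hasDerivAt_integral_klIntegrand_gpdf_mean hσ)

theorem hasDerivAt_entropyObjective_mix_gpdf_std (hr : Measurable r) (hbd : ∀ a, |r a| ≤ C)
    (hσ : 0 < σ) (hw₀ : 0 ≤ w) (hw₁ : w ≤ 1) (hJ : HasDerivAt (fun x => Jb r α μ x) d σ) :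
    HasDerivAt (fun x => entropyObjective volume r α
      (fun a => w * gpdf μ x a + (1 - w) * gpdf μ σ a)) (w * d) σ :=
  hasDerivAt_entropyObjective_mix hr hw₀ hw₁
    ((lt_mem_nhds hσ).mono fun _ hx => ⟨measurable_gpdf, gpdf_pos hx.ne',
      integrable_sub_mul_log_gpdf_mul_gpdf hr hbd α hx, integrable_klIntegrand_gpdf hx hσ⟩)
    hJ (hasDerivAt_integral_klIntegrand_gpdf_std hσ)

end Gaussian

section Mixture

variable {N : ℕ}

lemma sum_exp_pos (hN : 0 < N) (η : Fin N → ℝ) : 0 < ∑ j, exp (η j) :=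
  Finset.sum_pos (fun j _ => exp_pos (η j)) (Finset.univ_nonempty_iff.2 ⟨⟨0, hN⟩⟩)

lemma softmaxW_nonneg (η : Fin N → ℝ) (k : Fin N) : 0 ≤ softmaxW η k :=
  div_nonneg (exp_pos _).le (Finset.sum_nonneg fun j _ => (exp_pos (η j)).le)

lemma softmaxW_le_one (η : Fin N → ℝ) (k : Fin N) : softmaxW η k ≤ 1 :=
  div_le_one_of_le₀ (Finset.single_le_sum (fun j _ => (exp_pos (η j)).le) (Finset.mem_univ k))
    (Finset.sum_nonneg fun j _ => (exp_pos (η j)).le)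

lemma sum_softmaxW (hN : 0 < N) (η : Fin N → ℝ) : ∑ k, softmaxW η k = 1 := by
  simp only [softmaxW]
  rw [← Finset.sum_div, div_self (sum_exp_pos hN η).ne']

lemma mixDensity_const (hN : 0 < N) (μ σ : ℝ) (η : Fin N → ℝ) :
    mixDensity (fun _ => μ) (fun _ => σ) η = gpdf μ σ := by
  ext a
  rw [mixDensity, ← Finset.sum_mul, sum_softmaxW hN, one_mul]

lemma mixDensity_update (μs σs η : Fin N → ℝ) (k : Fin N) (x y a : ℝ) :
    mixDensity (Function.update μs k x) (Function.update σs k y) η a =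
      mixDensity μs σs η a + softmaxW η k * (gpdf x y a - gpdf (μs k) (σs k) a) := by
  rw [← sub_eq_iff_eq_add', mixDensity, mixDensity, ← Finset.sum_sub_distrib,
    Finset.sum_eq_single k (fun j _ hj => by simp [Function.update_of_ne hj]) (by simp)]
  simp only [Function.update_self]
  ring

lemma mixDensity_update_const (hN : 0 < N) (μ σ : ℝ) (η : Fin N → ℝ) (k : Fin N) (x y : ℝ) :
    mixDensity (Function.update (fun _ => μ) k x) (Function.update (fun _ => σ) k y) η =
      fun a => softmaxW η k * gpdf x y a + (1 - softmaxW η k) * gpdf μ σ a := by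
  ext a
  rw [mixDensity_update, mixDensity_const hN]
  ring

variable {r : ℝ → ℝ} {α : ℝ}

lemma Jm_const (hN : 0 < N) (μ σ : ℝ) (η : Fin N → ℝ) :
    Jm r α (fun _ => μ) (fun _ => σ) η = Jb r α μ σ := by
  rw [Jm, mixDensity_const hN, Jb]

lemma Jm_update_mean (hN : 0 < N) (μ σ : ℝ) (η : Fin N → ℝ) (k : Fin N) (x : ℝ) :
    Jm r α (Function.update (fun _ => μ) k x) (fun _ => σ) η = entropyObjective volume r α
      (fun a => softmaxW η k * gpdf x σ a + (1 - softmaxW η k) * gpdf μ σ a) := by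
  rw [Jm, ← Function.update_eq_self k (fun _ : Fin N => σ), mixDensity_update_const hN]
  rfl

lemma Jm_update_std (hN : 0 < N) (μ σ : ℝ) (η : Fin N → ℝ) (k : Fin N) (y : ℝ) :
    Jm r α (fun _ => μ) (Function.update (fun _ => σ) k y) η = entropyObjective volume r α
      (fun a => softmaxW η k * gpdf μ y a + (1 - softmaxW η k) * gpdf μ σ a) := by
  rw [Jm, ← Function.update_eq_self k (fun _ : Fin N => μ), mixDensity_update_const hN]
  rfl

end Mixture

theorem stmt3_general (r : ℝ → ℝ) (hmeas : Measurable r) (C : ℝ) (hbd : ∀ a, |r a| ≤ C)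
    (α : ℝ) (μt σt : ℝ) (hstat : IsStatB r α μt σt)
    (N : ℕ) (hN : 1 ≤ N) (η : Fin N → ℝ) :
    IsStatM r α (fun _ : Fin N => μt) (fun _ => σt) η ∧
    Jm r α (fun _ : Fin N => μt) (fun _ => σt) η = Jb r α μt σt := by
  obtain ⟨hσ, ⟨hdμ, hμ₀⟩, hdσ, hσ₀⟩ := hstat
  have hJμ : HasDerivAt (fun x => Jb r α x σt) 0 μt := hμ₀ ▸ hdμ.hasDerivAt
  have hJσ : HasDerivAt (fun y => Jb r α μt y) 0 σt := hσ₀ ▸ hdσ.hasDerivAt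
  refine ⟨⟨fun _ => hσ, fun k => ?_⟩, Jm_const hN μt σt η⟩
  have hw₀ := softmaxW_nonneg η k
  have hw₁ := softmaxW_le_one η k
  have hmean : HasDerivAt (fun x => Jm r α (Function.update (fun _ => μt) k x) (fun _ => σt) η)
      0 μt := by
    simpa only [Jm_update_mean hN, mul_zero] using
      hasDerivAt_entropyObjective_mix_gpdf_mean hmeas hbd hσ hw₀ hw₁ hJμ
  have hstd : HasDerivAt (fun y => Jm r α (fun _ => μt) (Function.update (fun _ => σt) k y) η)
      0 σt := by
    simpa only [Jm_update_std hN, mul_zero] using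
      hasDerivAt_entropyObjective_mix_gpdf_std hmeas hbd hσ hw₀ hw₁ hJσ
  have hweight : (fun v => Jm r α (fun _ => μt) (fun _ => σt) (Function.update η k v)) =
      fun _ => Jb r α μt σt := funext fun v => Jm_const hN μt σt _
  exact ⟨⟨hmean.differentiableAt, hmean.deriv⟩, ⟨hstd.differentiableAt, hstd.deriv⟩,
    by rw [hweight]; exact ⟨differentiableAt_const _, deriv_const _ _⟩⟩

/-- every stationary point of the Gaussian objective yields, by
duplicating it in all components (for any softmax-weight parameters), a
stationary point of the `N`-component mixture objective with the same objective
value. -/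
theorem stmt3 (r : ℝ → ℝ) (hmeas : Measurable r) (C : ℝ) (hbd : ∀ a, |r a| ≤ C)
    (α : ℝ) (hα : 0 ≤ α) (μt σt : ℝ) (hstat : IsStatB r α μt σt)
    (N : ℕ) (hN : 1 ≤ N) (η : Fin N → ℝ) :
    IsStatM r α (fun _ : Fin N => μt) (fun _ => σt) η ∧
    Jm r α (fun _ : Fin N => μt) (fun _ => σt) η = Jb r α μt σt :=
  stmt3_general r hmeas C hbd α μt σt hstat N hN η
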